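/- (Graded Uniqueness Theorem) Let G be an ample Hausdorff groupoid, R a unital commutative ring, Γ a discrete group with identity ε, and (Σ, G, Γ) a Γ-graded discrete R-twist such that the clopen subgroupoid G_ε = c_G⁻¹(ε) is effective. If Q is a Γ-graded ring and π : A_R(G; Σ) → Q is a graded ring homomorphism, then π is injective if and only if π(r 1̃_K) ≠ 0 for every nonempty compact open subset K of Σ⁽⁰⁾ and every nonzero r ∈ R. -/

import Mathlib

open Set Function TopologicalSpace Classical
noncomputable section

universe u v w

/-- An étale topological groupoid, encoded with total operations:
`mul a b` is only meaningful when `src a = rng b`. -/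
structure EtaleGroupoid (G : Type u) [TopologicalSpace G] where
  mul : G → G → G
  inv : G → G
  src : G → G
  rng : G → G
  rng_mul_self : ∀ g, mul (rng g) g = g
  mul_src_self : ∀ g, mul g (src g) = g
  src_inv : ∀ g, src (inv g) = rng g
  rng_inv : ∀ g, rng (inv g) = src g
  inv_inv : ∀ g, inv (inv g) = g
  inv_mul_self : ∀ g, mul (inv g) g = src g
  mul_inv_self : ∀ g, mul g (inv g) = rng g
  mul_assoc' : ∀ a b c, src a = rng b → src b = rng c →
    mul (mul a b) c = mul a (mul b c)
  src_mul : ∀ a b, src a = rng b → src (mul a b) = src b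
  rng_mul : ∀ a b, src a = rng b → rng (mul a b) = rng a
  continuous_inv : Continuous inv
  continuousOn_mul :
    ContinuousOn (fun p : G × G => mul p.1 p.2) {p : G × G | src p.1 = rng p.2}
  isLocalHomeomorph_src : IsLocalHomeomorph src

namespace EtaleGroupoid

variable {G : Type u} [TopologicalSpace G] (𝒢 : EtaleGroupoid G)

/-- The unit space `G⁽⁰⁾`. -/
def unitSpace : Set G := Set.range 𝒢.src

/-- The isotropy bundle `Iso(G) = {γ : r γ = s γ}`. -/
def iso : Set G := {g | 𝒢.rng g = 𝒢.src g}

/-- The isotropy group `Gᵤᵘ` at a unit `u`. -/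
def isoAt (u : G) : Set G := {g | 𝒢.rng g = u ∧ 𝒢.src g = u}

/-- `U` is a bisection: `src` and `rng` are injective on `U`. -/
def IsBisection (U : Set G) : Prop := Set.InjOn 𝒢.src U ∧ Set.InjOn 𝒢.rng U

/-- `U` is a compact open bisection. -/
def IsCOB (U : Set G) : Prop := IsCompact U ∧ IsOpen U ∧ 𝒢.IsBisection U

/-- Pointwise inverse of a set. -/
def setInv (U : Set G) : Set G := 𝒢.inv '' U

/-- Pointwise product of two sets (only composable products). -/
def setMul (U V : Set G) : Set G :=
  {g | ∃ a ∈ U, ∃ b ∈ V, 𝒢.src a = 𝒢.rng b ∧ g = 𝒢.mul a b}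

/-- `H` is a subgroupoid of `G`. -/
def IsSubgroupoid (H : Set G) : Prop :=
  (∀ a ∈ H, 𝒢.inv a ∈ H) ∧
  (∀ a ∈ H, ∀ b ∈ H, 𝒢.src a = 𝒢.rng b → 𝒢.mul a b ∈ H) ∧
  (∀ a ∈ H, 𝒢.src a ∈ H)

/-- The groupoid is effective: the interior of the isotropy is the unit space. -/
def Effective : Prop := interior 𝒢.iso = 𝒢.unitSpace

/-- A continuous (i.e. locally constant) `Rˣ`-valued 2-cocycle on `G`. -/
def IsCocycle {R : Type w} [CommRing R] (c : G → G → Rˣ) : Prop :=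
  IsLocallyConstant (fun p : {p : G × G // 𝒢.src p.1 = 𝒢.rng p.2} => c p.1.1 p.1.2) ∧
  (∀ a b d, 𝒢.src a = 𝒢.rng b → 𝒢.src b = 𝒢.rng d →
    c a b * c (𝒢.mul a b) d = c b d * c a (𝒢.mul b d)) ∧
  (∀ g, c (𝒢.rng g) g = 1 ∧ c g (𝒢.src g) = 1)

/-- Membership in the (cocycle-twisted) Steinberg algebra `A_R(G)`:
locally constant, compactly supported functions `G → R`. -/
def MemSt {R : Type w} [CommRing R] (f : G → R) : Prop :=
  IsLocallyConstant f ∧ ∃ K : Set G, IsCompact K ∧ Function.support f ⊆ K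

/-- Convolution on `A_R(G;σ)` twisted by a 2-cocycle `c`. -/
noncomputable def convC {R : Type w} [CommRing R] (c : G → G → Rˣ) (f g : G → R) :
    G → R := fun γ =>
  ∑ᶠ p : G × G,
    if 𝒢.src p.1 = 𝒢.rng p.2 ∧ 𝒢.mul p.1 p.2 = γ then
      (c p.1 p.2 : R) * f p.1 * g p.2 else 0

/-- A continuous `Γ`-grading on `G` (for a discrete group `Γ`). -/
def IsGrading {Γ : Type*} [Group Γ] (c : G → Γ) : Prop :=
  IsLocallyConstant c ∧ ∀ a b, 𝒢.src a = 𝒢.rng b → c (𝒢.mul a b) = c a * c b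

end EtaleGroupoid

/-- An ample groupoid: étale with a basis of compact open bisections. -/
structure AmpleGroupoid (G : Type u) [TopologicalSpace G] extends EtaleGroupoid G where
  ample : TopologicalSpace.IsTopologicalBasis {U : Set G | toEtaleGroupoid.IsCOB U}

/-- A discrete twist `G⁽⁰⁾ × Rˣ → Σ → G` over an ample groupoid `G`. -/
structure DiscreteTwist (R : Type w) [CommRing R] {G : Type u} {S : Type v}
    [TopologicalSpace G] [TopologicalSpace S]
    (𝒢 : AmpleGroupoid G) (𝒮 : EtaleGroupoid S) where
  i : G → Rˣ → S
  q : S → G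
  continuousOn_i : ∀ t : Rˣ, ContinuousOn (fun x => i x t) 𝒢.unitSpace
  continuous_q : Continuous q
  i_injOn : Set.InjOn (fun p : G × Rˣ => i p.1 p.2) (𝒢.unitSpace ×ˢ (Set.univ : Set Rˣ))
  q_surj : Function.Surjective q
  exact' : ∀ x ∈ 𝒢.unitSpace, q ⁻¹' {x} = {σ | ∃ t : Rˣ, σ = i x t}
  i_mul : ∀ x ∈ 𝒢.unitSpace, ∀ s t : Rˣ, 𝒮.mul (i x s) (i x t) = i x (s * t)
  unit_eq : 𝒮.unitSpace = (fun x => i x 1) '' 𝒢.unitSpace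
  q_mul : ∀ a b, 𝒮.src a = 𝒮.rng b → q (𝒮.mul a b) = 𝒢.mul (q a) (q b)
  q_inv : ∀ a, q (𝒮.inv a) = 𝒢.inv (q a)
  q_src : ∀ a, q (𝒮.src a) = 𝒢.src (q a)
  q_rng : ∀ a, q (𝒮.rng a) = 𝒢.rng (q a)
  q_unit_bij : Set.BijOn q 𝒮.unitSpace 𝒢.unitSpace
  central : ∀ (σ : S) (t : Rˣ),
    𝒮.mul (i (𝒢.rng (q σ)) t) σ = 𝒮.mul σ (i (𝒢.src (q σ)) t)
  loc_triv : ∀ α : G, ∃ B : Set G, IsOpen B ∧ α ∈ B ∧ 𝒢.IsBisection B ∧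
    ∃ P : G → S, ContinuousOn P B ∧ (∀ β ∈ B, q (P β) = β) ∧
      (∀ t : Rˣ, ContinuousOn (fun β => 𝒮.mul (i (𝒢.rng β) t) (P β)) B) ∧
      (∀ σ : S, q σ ∈ B →
        ∃! p : G × Rˣ, p.1 ∈ B ∧ 𝒮.mul (i (𝒢.rng p.1) p.2) (P p.1) = σ) ∧
      (∀ t : Rˣ, ∀ V ⊆ B, IsOpen V →
        IsOpen ((fun β => 𝒮.mul (i (𝒢.rng β) t) (P β)) '' V))

namespace DiscreteTwist

variable {R : Type w} [CommRing R] {G : Type u} {S : Type v}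
  [TopologicalSpace G] [TopologicalSpace S]
  {𝒢 : AmpleGroupoid G} {𝒮 : EtaleGroupoid S} (T : DiscreteTwist R 𝒢 𝒮)

/-- The action of `Rˣ` on `Σ`: `t • σ = i(r σ, t) σ`. -/
def act (t : Rˣ) (σ : S) : S := 𝒮.mul (T.i (𝒢.rng (T.q σ)) t) σ

/-- The function `1̃_X` associated to a subset `X ⊆ Σ`. -/
noncomputable def tilde (X : Set S) : S → R := fun σ =>
  if h : ∃ t : Rˣ, σ ∈ T.act t '' X then (((Classical.choose h)⁻¹ : Rˣ) : R) else 0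

/-- Membership in the twisted Steinberg algebra `A_R(G;Σ)`: locally constant,
`Rˣ`-contravariant functions with compact image of the support in `G`. -/
def MemA (f : S → R) : Prop :=
  IsLocallyConstant f ∧
  (∀ (t : Rˣ) (σ : S), f (T.act t σ) = ((t⁻¹ : Rˣ) : R) * f σ) ∧
  IsCompact (T.q '' Function.support f)

/-- A (not necessarily continuous) section of `q`. -/
noncomputable def sec : G → S := Function.surjInv T.q_surj

/-- Convolution on `A_R(G;Σ)`, defined via the section `sec`. -/
noncomputable def conv (f g : S → R) : S → R := fun σ =>
  ∑ᶠ α : G,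
    if 𝒢.rng α = 𝒢.rng (T.q σ) then
      f (T.sec α) * g (𝒮.mul (𝒮.inv (T.sec α)) σ) else 0

end DiscreteTwist

end

/-!
Injectivity gives `π (r 1̃_K) ≠ 0` because `r 1̃_K` takes the value `r` on `K`.

Conversely, let `π h = 0` with `h ≠ 0`. The homogeneous components of `h` are sent to
independent homogeneous elements of `Q` with sum `0`, so `π` kills each of them; pick one, `p`,
of degree `γ` with `p σ₀ ≠ 0`. Convolving `p` with `1̃` of a slice of degree `γ⁻¹` through
`q(σ₀)⁻¹` gives a degree-`ε` element `w` of the kernel that is nonzero at the unit over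
`r(q σ₀)`, hence constant `= r ≠ 0` on the units of a neighbourhood of it. The non-unit arrows of
`supp w` form a compact subset of `G_ε`, and effectiveness of `G_ε` shrinks that neighbourhood to
a nonempty compact open set `K` of units inside which none of these arrows starts and ends. Then
`1̃_K * w * 1̃_K = r 1̃_K`, so `π (r 1̃_K) = 0`.
-/

namespace EtaleGroupoid

variable {G : Type*} [TopologicalSpace G] (𝒢 : EtaleGroupoid G)

lemma src_rng (g : G) : 𝒢.src (𝒢.rng g) = 𝒢.rng g := by
  simpa only [𝒢.mul_inv_self, 𝒢.src_inv] using 𝒢.src_mul g (𝒢.inv g) (𝒢.rng_inv g).symm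

lemma src_src (g : G) : 𝒢.src (𝒢.src g) = 𝒢.src g := by
  rw [← 𝒢.rng_inv g, src_rng]

lemma rng_src (g : G) : 𝒢.rng (𝒢.src g) = 𝒢.src g := by
  simpa only [𝒢.inv_mul_self, 𝒢.rng_inv] using
    𝒢.rng_mul (𝒢.inv g) g (𝒢.src_inv g)

lemma src_mem_unitSpace (g : G) : 𝒢.src g ∈ 𝒢.unitSpace := ⟨g, rfl⟩

lemma rng_mem_unitSpace (g : G) : 𝒢.rng g ∈ 𝒢.unitSpace := ⟨𝒢.inv g, 𝒢.src_inv g⟩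

lemma mem_unitSpace_iff {u : G} : u ∈ 𝒢.unitSpace ↔ 𝒢.src u = u :=
  ⟨by rintro ⟨g, rfl⟩; exact 𝒢.src_src g, fun h => ⟨u, h⟩⟩

lemma src_of_mem_unitSpace {u : G} (hu : u ∈ 𝒢.unitSpace) : 𝒢.src u = u :=
  𝒢.mem_unitSpace_iff.1 hu

lemma rng_of_mem_unitSpace {u : G} (hu : u ∈ 𝒢.unitSpace) : 𝒢.rng u = u := by
  obtain ⟨g, rfl⟩ := hu
  exact 𝒢.rng_src g

lemma inv_mul_cancel_left {a b : G} (h : 𝒢.src a = 𝒢.rng b) :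
    𝒢.mul (𝒢.inv a) (𝒢.mul a b) = b := by
  rw [← 𝒢.mul_assoc' _ _ _ (𝒢.src_inv a) h, 𝒢.inv_mul_self, h, 𝒢.rng_mul_self]

lemma mul_inv_cancel_left {a b : G} (h : 𝒢.rng a = 𝒢.rng b) :
    𝒢.mul a (𝒢.mul (𝒢.inv a) b) = b := by
  simpa only [𝒢.inv_inv] using 𝒢.inv_mul_cancel_left (a := 𝒢.inv a) (by rw [𝒢.src_inv, h])

lemma mul_inv_cancel_right {a b : G} (h : 𝒢.src a = 𝒢.rng b) :
    𝒢.mul (𝒢.mul a b) (𝒢.inv b) = a := by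
  rw [𝒢.mul_assoc' a b (𝒢.inv b) h (𝒢.rng_inv b).symm, 𝒢.mul_inv_self, ← h, 𝒢.mul_src_self]

lemma inv_mul_cancel_right {a b : G} (h : 𝒢.src a = 𝒢.src b) :
    𝒢.mul (𝒢.mul a (𝒢.inv b)) b = a := by
  simpa only [𝒢.inv_inv] using 𝒢.mul_inv_cancel_right (b := 𝒢.inv b) (by rwa [𝒢.rng_inv])

lemma inv_mul {a b : G} (h : 𝒢.src a = 𝒢.rng b) :
    𝒢.inv (𝒢.mul a b) = 𝒢.mul (𝒢.inv b) (𝒢.inv a) := by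
  have hba : 𝒢.src (𝒢.inv b) = 𝒢.rng (𝒢.inv a) := by rw [𝒢.src_inv, 𝒢.rng_inv, h]
  have hyx : 𝒢.mul (𝒢.mul (𝒢.inv b) (𝒢.inv a)) (𝒢.mul a b) = 𝒢.src (𝒢.mul a b) := by
    rw [𝒢.mul_assoc' _ _ _ hba (by rw [𝒢.src_inv, 𝒢.rng_mul _ _ h]),
      𝒢.inv_mul_cancel_left h, 𝒢.inv_mul_self, 𝒢.src_mul _ _ h]
  calc 𝒢.inv (𝒢.mul a b)
      = 𝒢.mul (𝒢.src (𝒢.mul a b)) (𝒢.inv (𝒢.mul a b)) := by rw [← 𝒢.rng_inv, 𝒢.rng_mul_self]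
    _ = 𝒢.mul (𝒢.inv b) (𝒢.inv a) := by
        rw [← hyx, 𝒢.mul_inv_cancel_right (by rw [𝒢.src_mul _ _ hba, 𝒢.src_inv, 𝒢.rng_mul _ _ h])]

lemma continuous_rng : Continuous 𝒢.rng := by
  have h : Continuous fun g => 𝒢.mul g (𝒢.inv g) :=
    𝒢.continuousOn_mul.comp_continuous (continuous_id.prodMk 𝒢.continuous_inv)
      fun g => (𝒢.rng_inv g).symm
  simpa only [𝒢.mul_inv_self] using h

lemma continuous_src : Continuous 𝒢.src := by
  simpa only [Function.comp_def, 𝒢.rng_inv] using 𝒢.continuous_rng.comp 𝒢.continuous_inv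

lemma isOpen_unitSpace : IsOpen 𝒢.unitSpace :=
  𝒢.isLocalHomeomorph_src.isOpenMap.isOpen_range

lemma isClosed_unitSpace [T2Space G] : IsClosed 𝒢.unitSpace := by
  have h : 𝒢.unitSpace = {g | 𝒢.src g = g} := Set.ext fun _ => 𝒢.mem_unitSpace_iff
  rw [h]
  exact isClosed_eq 𝒢.continuous_src continuous_id

lemma isCompact_setMul [T2Space G] {U V : Set G} (hU : IsCompact U) (hV : IsCompact V) :
    IsCompact (𝒢.setMul U V) := by
  have h : 𝒢.setMul U V =
      (fun p : G × G => 𝒢.mul p.1 p.2) '' (U ×ˢ V ∩ {p | 𝒢.src p.1 = 𝒢.rng p.2}) := by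
    ext g
    constructor
    · rintro ⟨a, ha, b, hb, hab, rfl⟩; exact ⟨(a, b), ⟨⟨ha, hb⟩, hab⟩, rfl⟩
    · rintro ⟨⟨a, b⟩, ⟨⟨ha, hb⟩, hab⟩, rfl⟩; exact ⟨a, ha, b, hb, hab, rfl⟩
  rw [h]
  exact ((hU.prod hV).inter_right (isClosed_eq (𝒢.continuous_src.comp continuous_fst)
    (𝒢.continuous_rng.comp continuous_snd))).image_of_continuousOn
    (𝒢.continuousOn_mul.mono inter_subset_right)

variable {𝒢} {Γ : Type*} [Group Γ] {c : G → Γ}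

lemma IsGrading.setMul_subset (hc : 𝒢.IsGrading c) {γ δ : Γ} {U V : Set G}
    (hU : U ⊆ c ⁻¹' {γ}) (hV : V ⊆ c ⁻¹' {δ}) : 𝒢.setMul U V ⊆ c ⁻¹' {γ * δ} := by
  rintro _ ⟨a, ha, b, hb, hab, rfl⟩
  rw [Set.mem_preimage, hc.2 a b hab, (hU ha : c a = γ), (hV hb : c b = δ)]
  rfl

lemma IsGrading.map_of_mem_unitSpace (hc : 𝒢.IsGrading c) {u : G} (hu : u ∈ 𝒢.unitSpace) :
    c u = 1 := by
  have h := hc.2 u u (by rw [𝒢.src_of_mem_unitSpace hu, 𝒢.rng_of_mem_unitSpace hu])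
  have huu : 𝒢.mul u u = u := by
    simpa only [𝒢.rng_of_mem_unitSpace hu] using 𝒢.rng_mul_self u
  rwa [huu, left_eq_mul] at h

lemma IsGrading.map_inv (hc : 𝒢.IsGrading c) (α : G) : c (𝒢.inv α) = (c α)⁻¹ := by
  have h := hc.2 (𝒢.inv α) α (𝒢.src_inv α)
  rw [𝒢.inv_mul_self, hc.map_of_mem_unitSpace (𝒢.src_mem_unitSpace α)] at h
  exact eq_inv_of_mul_eq_one_left h.symm

end EtaleGroupoid

lemma continuousOn_invFunOn_image {X Y : Type*} [TopologicalSpace X] [TopologicalSpace Y]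
    [T2Space Y] [Nonempty X] {φ : X → Y} (hφ : Continuous φ) {B : Set X} (hB : IsCompact B)
    (hinj : Set.InjOn φ B) : ContinuousOn (Function.invFunOn φ B) (φ '' B) := by
  rintro _ ⟨b, hb, rfl⟩ U hU
  obtain ⟨U', hU'U, hU'o, hbU'⟩ := mem_nhds_iff.1 hU
  have hleft : ∀ b' ∈ B, Function.invFunOn φ B (φ b') = b' := fun b' hb' =>
    hinj.leftInvOn_invFunOn hb'
  rw [hleft b hb] at hbU'
  rw [Filter.mem_map, mem_nhdsWithin]
  refine ⟨(φ '' (B \ U'))ᶜ, ((hB.diff hU'o).image hφ).isClosed.isOpen_compl, ?_, ?_⟩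
  · rintro ⟨b', ⟨hb'B, hb'U'⟩, hb'⟩
    exact hb'U' (hinj hb'B hb hb' ▸ hbU')
  · rintro _ ⟨hy, ⟨b', hb', rfl⟩⟩
    refine hU'U ?_
    rw [hleft b' hb']
    by_contra hb'U'
    exact hy ⟨b', ⟨hb', hb'U'⟩, rfl⟩

namespace EtaleGroupoid

variable {G : Type*} [TopologicalSpace G] (𝒢 : EtaleGroupoid G)

lemma exists_isOpen_forall_rng_not_mem [T2Space G] {U : Set G} (hUc : IsCompact U)
    (hU : Set.InjOn 𝒢.src U) {x : G} (hx : ∀ α ∈ U, 𝒢.src α = x → 𝒢.rng α ≠ x) :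
    ∃ O, IsOpen O ∧ x ∈ O ∧ ∀ α ∈ U, 𝒢.src α ∈ O → 𝒢.rng α ∉ O := by
  by_cases hxU : x ∈ 𝒢.src '' U
  · obtain ⟨β, hβ, rfl⟩ := hxU
    obtain ⟨O₁, O₂, hO₁, hO₂, hβO₁, hβO₂, hO₁₂⟩ := t2_separation (hx β hβ rfl).symm
    have hC : IsClosed (𝒢.src '' (U \ 𝒢.rng ⁻¹' O₂)) :=
      ((hUc.diff (hO₂.preimage 𝒢.continuous_rng)).image 𝒢.continuous_src).isClosed
    refine ⟨O₁ ∩ (𝒢.src '' (U \ 𝒢.rng ⁻¹' O₂))ᶜ, hO₁.inter hC.isOpen_compl, ⟨hβO₁, ?_⟩, ?_⟩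
    · rintro ⟨α, ⟨hα, hαO₂⟩, hαβ⟩
      exact hαO₂ (hU hα hβ hαβ ▸ hβO₂)
    · intro α hα hsrc hrng
      have hαO₂ : 𝒢.rng α ∈ O₂ := by_contra fun h => hsrc.2 ⟨α, ⟨hα, h⟩, rfl⟩
      exact Set.disjoint_left.1 hO₁₂ hrng.1 hαO₂
  · exact ⟨(𝒢.src '' U)ᶜ, (hUc.image 𝒢.continuous_src).isClosed.isOpen_compl, hxU,
      fun α hα hsrc => absurd ⟨α, hα, rfl⟩ hsrc⟩

def Avoidable (C : Set G) : Prop :=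
  ∀ K : Set G, IsOpen K → K.Nonempty →
    ∃ K' ⊆ K, IsOpen K' ∧ K'.Nonempty ∧ ∀ α ∈ C, 𝒢.src α ∈ K' → 𝒢.rng α ∉ K'

lemma avoidable_empty : 𝒢.Avoidable ∅ :=
  fun K hKo hKne => ⟨K, subset_rfl, hKo, hKne, fun _ h => h.elim⟩

variable {𝒢}

lemma Avoidable.mono {C D : Set G} (hCD : C ⊆ D) (hD : 𝒢.Avoidable D) : 𝒢.Avoidable C := by
  intro K hKo hKne
  obtain ⟨K', hK'K, hK'o, hK'ne, hK'D⟩ := hD K hKo hKne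
  exact ⟨K', hK'K, hK'o, hK'ne, fun α hα => hK'D α (hCD hα)⟩

lemma Avoidable.union {C D : Set G} (hC : 𝒢.Avoidable C) (hD : 𝒢.Avoidable D) :
    𝒢.Avoidable (C ∪ D) := by
  intro K hKo hKne
  obtain ⟨K₁, hK₁K, hK₁o, hK₁ne, hK₁C⟩ := hC K hKo hKne
  obtain ⟨K₂, hK₂K₁, hK₂o, hK₂ne, hK₂D⟩ := hD K₁ hK₁o hK₁ne
  refine ⟨K₂, hK₂K₁.trans hK₁K, hK₂o, hK₂ne, ?_⟩
  rintro α (hα | hα) hsrc hrng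
  · exact hK₁C α hα (hK₂K₁ hsrc) (hK₂K₁ hrng)
  · exact hK₂D α hα hsrc hrng

end EtaleGroupoid

namespace AmpleGroupoid

variable {G : Type*} [TopologicalSpace G] (𝒢 : AmpleGroupoid G)

lemma exists_isCompact_of_avoidable {C : Set G} (hC : 𝒢.Avoidable C) {K : Set G}
    (hKo : IsOpen K) (hKne : K.Nonempty) : ∃ K' ⊆ K, IsCompact K' ∧ IsOpen K' ∧ K'.Nonempty ∧
      ∀ α ∈ C, 𝒢.src α ∈ K' → 𝒢.rng α ∉ K' := by
  obtain ⟨K₁, hK₁K, hK₁o, ⟨x, hx⟩, hK₁C⟩ := hC K hKo hKne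
  obtain ⟨K', ⟨hK'c, hK'o, -⟩, hxK', hK'K₁⟩ := 𝒢.ample.exists_subset_of_mem_open hx hK₁o
  exact ⟨K', hK'K₁.trans hK₁K, hK'c, hK'o, ⟨x, hxK'⟩,
    fun α hα hsrc hrng => hK₁C α hα (hK'K₁ hsrc) (hK'K₁ hrng)⟩

variable [T2Space G] {Γ : Type*} [Group Γ] {c : G → Γ}

lemma avoidable_of_bisection (heff : interior (𝒢.iso ∩ c ⁻¹' {1}) = 𝒢.unitSpace) {U : Set G}
    (hUc : IsCompact U) (hUo : IsOpen U) (hU : Set.InjOn 𝒢.src U) (hU1 : U ⊆ c ⁻¹' {1})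
    (hUunit : Disjoint U 𝒢.unitSpace) : 𝒢.Avoidable U := by
  intro K hKo hKne
  -- otherwise `U ∩ src⁻¹ K` is an open set of degree-one isotropy, hence of units
  obtain ⟨x, hxK, hx⟩ : ∃ x ∈ K, ∀ α ∈ U, 𝒢.src α = x → 𝒢.rng α ≠ x := by
    by_contra! h
    obtain ⟨x, hxK⟩ := hKne
    obtain ⟨α, hα, hαx, -⟩ := h x hxK
    have hiso : U ∩ 𝒢.src ⁻¹' K ⊆ interior (𝒢.iso ∩ c ⁻¹' {1}) := by
      refine interior_maximal (fun β ⟨hβ, hβK⟩ => ⟨?_, hU1 hβ⟩)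
        (hUo.inter (hKo.preimage 𝒢.continuous_src))
      obtain ⟨β', hβ', hβ's, hβ'r⟩ := h _ hβK
      change 𝒢.rng β = 𝒢.src β
      rw [← hU hβ' hβ hβ's, hβ'r, hβ's]
    rw [heff] at hiso
    exact Set.disjoint_left.1 hUunit hα (hiso ⟨hα, by rw [Set.mem_preimage, hαx]; exact hxK⟩)
  obtain ⟨O, hO, hxO, hOU⟩ := 𝒢.exists_isOpen_forall_rng_not_mem hUc hU hx
  exact ⟨K ∩ O, Set.inter_subset_left, hKo.inter hO, ⟨x, hxK, hxO⟩,
    fun α hα hsrc hrng => hOU α hα hsrc.2 hrng.2⟩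

lemma avoidable_of_isCompact (heff : interior (𝒢.iso ∩ c ⁻¹' {1}) = 𝒢.unitSpace)
    (hc : IsLocallyConstant c) {C : Set G} (hC : IsCompact C) (hC1 : C ⊆ c ⁻¹' {1})
    (hCunit : Disjoint C 𝒢.unitSpace) : 𝒢.Avoidable C := by
  refine hC.induction_on 𝒢.avoidable_empty (fun _ _ h hD => hD.mono h)
    (fun _ _ hC hD => hC.union hD) fun α hα => ?_
  obtain ⟨U, ⟨hUc, hUo, hUbis⟩, hαU, hU⟩ := 𝒢.ample.exists_subset_of_mem_open
    (⟨hC1 hα, Set.disjoint_left.1 hCunit hα⟩ : α ∈ c ⁻¹' {1} \ 𝒢.unitSpace)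
    ((hc {1}).sdiff 𝒢.isClosed_unitSpace)
  exact ⟨U, mem_nhdsWithin_of_mem_nhds (hUo.mem_nhds hαU),
    𝒢.avoidable_of_bisection heff hUc hUo hUbis.1 (fun β hβ => (hU hβ).1)
      (Set.disjoint_left.2 fun β hβ => (hU hβ).2)⟩

end AmpleGroupoid

namespace DiscreteTwist

variable {R : Type*} [CommRing R] {G : Type*} {S : Type*}
  [TopologicalSpace G] [TopologicalSpace S]
  {𝒢 : AmpleGroupoid G} {𝒮 : EtaleGroupoid S} (T : DiscreteTwist R 𝒢 𝒮)

lemma act_def (t : Rˣ) (σ : S) : T.act t σ = 𝒮.mul (T.i (𝒢.rng (T.q σ)) t) σ := rfl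

lemma q_i {x : G} (hx : x ∈ 𝒢.unitSpace) (t : Rˣ) : T.q (T.i x t) = x := by
  have h : T.i x t ∈ T.q ⁻¹' {x} := by rw [T.exact' x hx]; exact ⟨t, rfl⟩
  simpa using h

lemma i_one_mem_unitSpace {x : G} (hx : x ∈ 𝒢.unitSpace) : T.i x 1 ∈ 𝒮.unitSpace := by
  rw [T.unit_eq]; exact ⟨x, hx, rfl⟩

lemma i_one_q {σ : S} (hσ : σ ∈ 𝒮.unitSpace) : T.i (T.q σ) 1 = σ := by
  have hx : T.q σ ∈ 𝒢.unitSpace := T.q_unit_bij.1 hσ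
  exact T.q_unit_bij.2.1 (T.i_one_mem_unitSpace hx) hσ (T.q_i hx 1)

lemma src_eq_i_one (σ : S) : 𝒮.src σ = T.i (𝒢.src (T.q σ)) 1 := by
  rw [← T.q_src, T.i_one_q (𝒮.src_mem_unitSpace σ)]

lemma rng_eq_i_one (σ : S) : 𝒮.rng σ = T.i (𝒢.rng (T.q σ)) 1 := by
  rw [← T.q_rng, T.i_one_q (𝒮.rng_mem_unitSpace σ)]

lemma src_i {x : G} (hx : x ∈ 𝒢.unitSpace) (t : Rˣ) : 𝒮.src (T.i x t) = T.i x 1 := by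
  rw [T.src_eq_i_one, T.q_i hx, 𝒢.src_of_mem_unitSpace hx]

lemma rng_i {x : G} (hx : x ∈ 𝒢.unitSpace) (t : Rˣ) : 𝒮.rng (T.i x t) = T.i x 1 := by
  rw [T.rng_eq_i_one, T.q_i hx, 𝒢.rng_of_mem_unitSpace hx]

lemma src_eq_of_q_src_eq {σ τ : S} (h : 𝒢.src (T.q σ) = 𝒢.src (T.q τ)) :
    𝒮.src σ = 𝒮.src τ := by
  rw [T.src_eq_i_one, T.src_eq_i_one, h]

lemma rng_eq_of_q_rng_eq {σ τ : S} (h : 𝒢.rng (T.q σ) = 𝒢.rng (T.q τ)) :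
    𝒮.rng σ = 𝒮.rng τ := by
  rw [T.rng_eq_i_one, T.rng_eq_i_one, h]

lemma src_i_rng (σ : S) (t : Rˣ) : 𝒮.src (T.i (𝒢.rng (T.q σ)) t) = 𝒮.rng σ := by
  rw [T.src_i (𝒢.rng_mem_unitSpace _), T.rng_eq_i_one]

lemma inv_i {x : G} (hx : x ∈ 𝒢.unitSpace) (t : Rˣ) : 𝒮.inv (T.i x t) = T.i x t⁻¹ := by
  have h := 𝒮.inv_mul_cancel_left (a := T.i x t) (b := T.i x t⁻¹)
    (by rw [T.src_i hx, T.rng_i hx])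
  rwa [T.i_mul x hx, mul_inv_cancel, ← T.rng_i hx t, ← 𝒮.src_inv, 𝒮.mul_src_self] at h

lemma q_act (t : Rˣ) (σ : S) : T.q (T.act t σ) = T.q σ := by
  rw [T.act_def, T.q_mul _ _ (T.src_i_rng σ t), T.q_i (𝒢.rng_mem_unitSpace _), 𝒢.rng_mul_self]

lemma act_one (σ : S) : T.act 1 σ = σ := by
  rw [T.act_def, ← T.rng_eq_i_one, 𝒮.rng_mul_self]

lemma act_act (t s : Rˣ) (σ : S) : T.act t (T.act s σ) = T.act (t * s) σ := by
  have hx : 𝒢.rng (T.q σ) ∈ 𝒢.unitSpace := 𝒢.rng_mem_unitSpace _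
  rw [T.act_def t, T.q_act, T.act_def s, T.act_def (t * s),
    ← 𝒮.mul_assoc' _ _ _ (by rw [T.src_i hx, T.rng_i hx]) (T.src_i_rng σ s), T.i_mul _ hx]

lemma act_eq_mul_i_src (t : Rˣ) (σ : S) : T.act t σ = 𝒮.mul σ (T.i (𝒢.src (T.q σ)) t) :=
  T.central σ t

lemma exists_act_eq_of_q_eq {σ τ : S} (h : T.q σ = T.q τ) : ∃ t : Rˣ, σ = T.act t τ := by
  have hrng : 𝒮.rng σ = 𝒮.rng τ := T.rng_eq_of_q_rng_eq (by rw [h])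
  have hcomp : 𝒮.src (𝒮.inv τ) = 𝒮.rng σ := by rw [𝒮.src_inv, hrng]
  have hq : T.q (𝒮.mul (𝒮.inv τ) σ) = 𝒢.src (T.q τ) := by
    rw [T.q_mul _ _ hcomp, T.q_inv, h, 𝒢.inv_mul_self]
  have hmem : 𝒮.mul (𝒮.inv τ) σ ∈ T.q ⁻¹' {𝒢.src (T.q τ)} := hq
  rw [T.exact' _ (𝒢.src_mem_unitSpace _)] at hmem
  obtain ⟨t, ht⟩ := hmem
  refine ⟨t, ?_⟩
  rw [T.act_eq_mul_i_src, ← ht, 𝒮.mul_inv_cancel_left hrng.symm]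

lemma inv_act (t : Rˣ) (σ : S) : 𝒮.inv (T.act t σ) = T.act t⁻¹ (𝒮.inv σ) := by
  rw [T.act_def t σ, 𝒮.inv_mul (T.src_i_rng σ t), T.inv_i (𝒢.rng_mem_unitSpace _),
    T.act_eq_mul_i_src, T.q_inv, 𝒢.src_inv]

lemma act_mul (t : Rˣ) {a b : S} (h : 𝒮.src a = 𝒮.rng b) :
    𝒮.mul (T.act t a) b = T.act t (𝒮.mul a b) := by
  have hq : 𝒢.src (T.q a) = 𝒢.rng (T.q b) := by rw [← T.q_src, ← T.q_rng, h]
  rw [T.act_def, 𝒮.mul_assoc' _ a b (T.src_i_rng a t) h, T.act_def, T.q_mul a b h,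
    𝒢.rng_mul _ _ hq]

lemma mul_act (t : Rˣ) {a b : S} (h : 𝒮.src a = 𝒮.rng b) :
    𝒮.mul a (T.act t b) = T.act t (𝒮.mul a b) := by
  have hq : 𝒢.src (T.q a) = 𝒢.rng (T.q b) := by rw [← T.q_src, ← T.q_rng, h]
  have hb : 𝒮.src b = 𝒮.rng (T.i (𝒢.src (T.q b)) t) := by
    rw [T.rng_i (𝒢.src_mem_unitSpace _), T.src_eq_i_one]
  rw [T.act_eq_mul_i_src, ← 𝒮.mul_assoc' a b _ h hb, T.act_eq_mul_i_src, T.q_mul a b h,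
    𝒢.src_mul _ _ hq]

lemma continuous_act (t : Rˣ) : Continuous (T.act t) :=
  𝒮.continuousOn_mul.comp_continuous
    (((T.continuousOn_i t).comp_continuous (𝒢.continuous_rng.comp T.continuous_q)
      fun _ => 𝒢.rng_mem_unitSpace _).prodMk continuous_id)
    fun σ => T.src_i_rng σ t

lemma image_act (t : Rˣ) (U : Set S) : T.act t '' U = T.act t⁻¹ ⁻¹' U := by
  ext σ
  constructor
  · rintro ⟨τ, hτ, rfl⟩
    rwa [Set.mem_preimage, T.act_act, inv_mul_cancel, T.act_one]
  · intro hσ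
    exact ⟨T.act t⁻¹ σ, hσ, by rw [T.act_act, mul_inv_cancel, T.act_one]⟩

lemma isOpenMap_act (t : Rˣ) : IsOpenMap (T.act t) := fun U hU => by
  rw [T.image_act]
  exact hU.preimage (T.continuous_act t⁻¹)

lemma act_left_injective (σ : S) : Function.Injective fun t : Rˣ => T.act t σ := by
  intro t s h
  have hx := 𝒢.rng_mem_unitSpace (T.q σ)
  have key : ∀ t : Rˣ, 𝒮.mul (T.act t σ) (𝒮.inv σ) = T.i (𝒢.rng (T.q σ)) t := fun t =>
    𝒮.mul_inv_cancel_right (T.src_i_rng σ t)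
  have hi : T.i (𝒢.rng (T.q σ)) t = T.i (𝒢.rng (T.q σ)) s := by
    rw [← key, ← key s]; exact congrArg (𝒮.mul · (𝒮.inv σ)) h
  exact congrArg Prod.snd (T.i_injOn (x₁ := (_, t)) (x₂ := (_, s)) ⟨hx, trivial⟩ ⟨hx, trivial⟩ hi)

structure IsSlice (B : Set G) (P : G → S) : Prop where
  isCompact : IsCompact B
  isOpen : IsOpen B
  isBisection : 𝒢.IsBisection B
  isOpen_image : IsOpen (P '' B)
  continuousOn : ContinuousOn P B
  q_apply : ∀ β ∈ B, T.q (P β) = β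

lemma exists_isSlice {α : G} {O : Set G} (hO : IsOpen O) (hα : α ∈ O) :
    ∃ B P, T.IsSlice B P ∧ α ∈ B ∧ B ⊆ O := by
  obtain ⟨B₀, hB₀, hαB₀, -, P, hP, hqP, -, -, hPopen⟩ := T.loc_triv α
  obtain ⟨B, ⟨hBc, hBo, hBbis⟩, hαB, hBsub⟩ :=
    𝒢.ample.exists_subset_of_mem_open (⟨hαB₀, hα⟩ : α ∈ B₀ ∩ O) (hB₀.inter hO)
  have hBB₀ : B ⊆ B₀ := fun β hβ => (hBsub hβ).1
  refine ⟨B, P, ⟨hBc, hBo, hBbis, ?_, hP.mono hBB₀, fun β hβ => hqP β (hBB₀ hβ)⟩, hαB,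
    fun β hβ => (hBsub hβ).2⟩
  convert hPopen 1 B hBB₀ hBo using 1
  refine Set.image_congr fun β hβ => ?_
  have h := T.act_one (P β)
  rwa [T.act_def, hqP β (hBB₀ hβ), eq_comm] at h

lemma isSlice_i_one {K : Set G} (hK : K ⊆ 𝒢.unitSpace) (hKc : IsCompact K) (hKo : IsOpen K) :
    T.IsSlice K fun x => T.i x 1 := by
  have himage : (fun x => T.i x 1) '' K = T.q ⁻¹' K ∩ 𝒮.unitSpace := by
    ext σ
    constructor
    · rintro ⟨x, hx, rfl⟩
      exact ⟨by rw [Set.mem_preimage, T.q_i (hK hx)]; exact hx, T.i_one_mem_unitSpace (hK hx)⟩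
    · rintro ⟨hq, hσ⟩
      exact ⟨T.q σ, hq, T.i_one_q hσ⟩
  refine ⟨hKc, hKo, ⟨fun a ha b hb h => ?_, fun a ha b hb h => ?_⟩, ?_,
    (T.continuousOn_i 1).mono hK, fun x hx => T.q_i (hK hx) 1⟩
  · rwa [𝒢.src_of_mem_unitSpace (hK ha), 𝒢.src_of_mem_unitSpace (hK hb)] at h
  · rwa [𝒢.rng_of_mem_unitSpace (hK ha), 𝒢.rng_of_mem_unitSpace (hK hb)] at h
  · rw [himage]
    exact (hKo.preimage T.continuous_q).inter 𝒮.isOpen_unitSpace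

lemma isOpenMap_q : IsOpenMap T.q := by
  intro W hW
  rw [isOpen_iff_forall_mem_open]
  rintro _ ⟨σ, hσ, rfl⟩
  obtain ⟨B, P, hS, hσB, -⟩ := T.exists_isSlice isOpen_univ (Set.mem_univ (T.q σ))
  obtain ⟨t, ht⟩ := T.exists_act_eq_of_q_eq (hS.q_apply _ hσB).symm
  refine ⟨B ∩ (fun β => T.act t (P β)) ⁻¹' W, fun β hβ => ⟨_, hβ.2, ?_⟩,
    ((T.continuous_act t).comp_continuousOn hS.continuousOn).isOpen_inter_preimage hS.isOpen hW,
    hσB, ?_⟩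
  · rw [T.q_act, hS.q_apply β hβ.1]
  · rw [Set.mem_preimage, ← ht]; exact hσ

lemma isClosed_of_isClosed_preimage_q {E : Set G} (hE : IsClosed (T.q ⁻¹' E)) : IsClosed E := by
  rw [← isOpen_compl_iff, ← Set.image_preimage_eq Eᶜ T.q_surj]
  exact T.isOpenMap_q _ hE.isOpen_compl

def Contravariant (f : S → R) : Prop :=
  ∀ (t : Rˣ) (σ : S), f (T.act t σ) = ((t⁻¹ : Rˣ) : R) * f σ

variable {T} in
lemma Contravariant.apply_ne_zero {f : S → R} (hf : T.Contravariant f) {σ τ : S}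
    (h : T.q σ = T.q τ) (hσ : f σ ≠ 0) : f τ ≠ 0 := by
  obtain ⟨t, rfl⟩ := T.exists_act_eq_of_q_eq h
  rw [hf] at hσ
  exact right_ne_zero_of_mul hσ

variable {T} in
lemma Contravariant.isClosed_image_support {f : S → R} (hf : T.Contravariant f)
    (hlc : IsLocallyConstant f) : IsClosed (T.q '' Function.support f) := by
  apply T.isClosed_of_isClosed_preimage_q
  have h : T.q ⁻¹' (T.q '' Function.support f) = Function.support f :=
    Set.Subset.antisymm (fun σ ⟨τ, hτ, hq⟩ => hf.apply_ne_zero hq hτ)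
      (Set.subset_preimage_image _ _)
  rw [h]
  exact (hlc.isOpen_fiber 0).isClosed_compl

lemma memA_of {f : S → R} (hlc : IsLocallyConstant f) (hf : T.Contravariant f) {C : Set G}
    (hC : IsCompact C) (hsub : T.q '' Function.support f ⊆ C) : T.MemA f :=
  ⟨hlc, hf, hC.of_isClosed_subset (hf.isClosed_image_support hlc) hsub⟩

variable {T} in
lemma MemA.contravariant {f : S → R} (hf : T.MemA f) : T.Contravariant f := hf.2.1

lemma memA_zero : T.MemA 0 :=
  ⟨IsLocallyConstant.const 0, fun _ _ => by simp, by simp⟩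

variable {T} in
lemma MemA.add {f g : S → R} (hf : T.MemA f) (hg : T.MemA g) : T.MemA (f + g) :=
  T.memA_of (hf.1.add hg.1) (fun t σ => by simp only [Pi.add_apply, hf.2.1 t σ, hg.2.1 t σ,
    mul_add]) (hf.2.2.union hg.2.2)
    (by rw [← Set.image_union]; exact Set.image_mono (Function.support_add f g))

variable {T} in
lemma MemA.neg {f : S → R} (hf : T.MemA f) : T.MemA (-f) :=
  ⟨hf.1.neg, fun t σ => by simp only [Pi.neg_apply, hf.2.1 t σ, mul_neg],
    by simpa only [Function.support_neg] using hf.2.2⟩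

variable {T} in
lemma MemA.const_mul {f : S → R} (hf : T.MemA f) (r : R) : T.MemA fun σ => r * f σ :=
  T.memA_of (hf.1.comp (r * ·)) (fun t σ => by simp only [hf.2.1 t σ, mul_left_comm])
    hf.2.2 (Set.image_mono (Function.support_mul_subset_right _ _))

lemma memA_finsetSum {ι : Type*} (s : Finset ι) {F : ι → S → R} (h : ∀ i ∈ s, T.MemA (F i)) :
    T.MemA (∑ i ∈ s, F i) := by
  classical
  induction s using Finset.induction_on with
  | empty => simpa using T.memA_zero
  | insert a s ha ih =>
    rw [Finset.sum_insert ha]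
    exact (h a (Finset.mem_insert_self a s)).add
      (ih fun i hi => h i (Finset.mem_insert_of_mem hi))

lemma q_sec (α : G) : T.q (T.sec α) = α := Function.surjInv_eq T.q_surj α

lemma src_inv_sec {α : G} {σ : S} (h : 𝒢.rng α = 𝒢.rng (T.q σ)) :
    𝒮.src (𝒮.inv (T.sec α)) = 𝒮.rng σ := by
  rw [𝒮.src_inv]; exact T.rng_eq_of_q_rng_eq (by rw [T.q_sec, h])

lemma q_inv_sec_mul {α : G} {σ : S} (h : 𝒢.rng α = 𝒢.rng (T.q σ)) :
    T.q (𝒮.mul (𝒮.inv (T.sec α)) σ) = 𝒢.mul (𝒢.inv α) (T.q σ) := by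
  rw [T.q_mul _ _ (T.src_inv_sec h), T.q_inv, T.q_sec]

lemma contravariant_conv {f g : S → R} (hg : T.Contravariant g) :
    T.Contravariant (T.conv f g) := by
  intro t σ
  have hterm : ∀ α : G,
      (if 𝒢.rng α = 𝒢.rng (T.q (T.act t σ)) then
        f (T.sec α) * g (𝒮.mul (𝒮.inv (T.sec α)) (T.act t σ)) else 0) =
      ((t⁻¹ : Rˣ) : R) * (if 𝒢.rng α = 𝒢.rng (T.q σ) then
        f (T.sec α) * g (𝒮.mul (𝒮.inv (T.sec α)) σ) else 0) := by
    intro α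
    rw [T.q_act]
    split_ifs with hα
    · rw [T.mul_act t (T.src_inv_sec hα), hg, mul_left_comm]
    · rw [mul_zero]
  rw [conv, conv, finsum_congr hterm]
  exact ((AddMonoidHom.mulLeft _).map_finsum_of_injective
    (Units.isUnit _).mul_right_injective _).symm

variable {T} {B : Set G} {P : G → S}

lemma IsSlice.exists_act_eq (hS : T.IsSlice B P) {σ : S} (hσ : T.q σ ∈ B) :
    ∃ t : Rˣ, σ = T.act t (P (T.q σ)) :=
  T.exists_act_eq_of_q_eq (hS.q_apply _ hσ).symm

lemma IsSlice.q_mem_of_tilde_ne_zero (hS : T.IsSlice B P) {σ : S} (h : T.tilde (P '' B) σ ≠ 0) :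
    T.q σ ∈ B := by
  by_contra hσ
  refine h (dif_neg ?_)
  rintro ⟨t, _, ⟨β, hβ, rfl⟩, rfl⟩
  rw [T.q_act, hS.q_apply β hβ] at hσ
  exact hσ hβ

lemma IsSlice.tilde_eq_zero (hS : T.IsSlice B P) {σ : S} (h : T.q σ ∉ B) :
    T.tilde (P '' B) σ = 0 :=
  by_contra fun h' => h (hS.q_mem_of_tilde_ne_zero h')

lemma IsSlice.tilde_act_apply (hS : T.IsSlice B P) {β : G} (hβ : β ∈ B) (t : Rˣ) :
    T.tilde (P '' B) (T.act t (P β)) = ((t⁻¹ : Rˣ) : R) := by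
  have hex : ∃ s : Rˣ, T.act t (P β) ∈ T.act s '' (P '' B) := ⟨t, _, ⟨β, hβ, rfl⟩, rfl⟩
  rw [tilde, dif_pos hex]
  obtain ⟨_, ⟨β', hβ', rfl⟩, h⟩ := Classical.choose_spec hex
  have hβ'β : β' = β := by
    simpa only [T.q_act, hS.q_apply β' hβ', hS.q_apply β hβ] using congrArg T.q h
  rw [hβ'β] at h
  rw [T.act_left_injective (P β) h]

lemma IsSlice.contravariant_tilde (hS : T.IsSlice B P) : T.Contravariant (T.tilde (P '' B)) := by
  intro t σ
  by_cases hσ : T.q σ ∈ B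
  · obtain ⟨s, hs⟩ := hS.exists_act_eq hσ
    rw [hs, T.act_act, hS.tilde_act_apply hσ, hS.tilde_act_apply hσ, mul_inv_rev,
      Units.val_mul, mul_comm]
  · rw [hS.tilde_eq_zero hσ, hS.tilde_eq_zero (by rwa [T.q_act]), mul_zero]

lemma IsSlice.isLocallyConstant_tilde [T2Space G] (hS : T.IsSlice B P) :
    IsLocallyConstant (T.tilde (P '' B)) := by
  rw [IsLocallyConstant.iff_exists_open]
  intro σ
  by_cases hσ : T.q σ ∈ B
  · obtain ⟨s, hs⟩ := hS.exists_act_eq hσ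
    refine ⟨T.act s '' (P '' B), T.isOpenMap_act s _ hS.isOpen_image, ⟨_, ⟨_, hσ, rfl⟩, hs.symm⟩,
      ?_⟩
    rintro _ ⟨_, ⟨β, hβ, rfl⟩, rfl⟩
    rw [hS.tilde_act_apply hβ, hs, hS.tilde_act_apply hσ]
  · refine ⟨T.q ⁻¹' Bᶜ, hS.isCompact.isClosed.isOpen_compl.preimage T.continuous_q, hσ,
      fun σ' hσ' => ?_⟩
    rw [hS.tilde_eq_zero hσ', hS.tilde_eq_zero hσ]

lemma IsSlice.memA_tilde [T2Space G] (hS : T.IsSlice B P) : T.MemA (T.tilde (P '' B)) :=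
  T.memA_of hS.isLocallyConstant_tilde hS.contravariant_tilde hS.isCompact
    fun _ ⟨_, hσ, hq⟩ => hq ▸ hS.q_mem_of_tilde_ne_zero hσ

lemma IsSlice.src_eq_rng_inv (hS : T.IsSlice B P) {σ : S} {β : G} (hβ : β ∈ B)
    (hsrc : 𝒢.src β = 𝒢.src (T.q σ)) : 𝒮.src σ = 𝒮.rng (𝒮.inv (P β)) := by
  rw [𝒮.rng_inv]; exact T.src_eq_of_q_src_eq (by rw [hS.q_apply β hβ, hsrc])

lemma IsSlice.q_mul_inv (hS : T.IsSlice B P) {σ : S} {β : G} (hβ : β ∈ B)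
    (hsrc : 𝒢.src β = 𝒢.src (T.q σ)) :
    T.q (𝒮.mul σ (𝒮.inv (P β))) = 𝒢.mul (T.q σ) (𝒢.inv β) := by
  rw [T.q_mul _ _ (hS.src_eq_rng_inv hβ hsrc), T.q_inv, hS.q_apply β hβ]

lemma IsSlice.conv_tilde_apply (hS : T.IsSlice B P) {f : S → R} (hf : T.Contravariant f)
    (σ : S) {β : G} (hβ : β ∈ B) (hsrc : 𝒢.src β = 𝒢.src (T.q σ)) :
    T.conv f (T.tilde (P '' B)) σ = f (𝒮.mul σ (𝒮.inv (P β))) := by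
  set τ := 𝒮.mul σ (𝒮.inv (P β))
  have hσβ := hS.src_eq_rng_inv hβ hsrc
  have hqτ : T.q τ = 𝒢.mul (T.q σ) (𝒢.inv β) := hS.q_mul_inv hβ hsrc
  have hinvτσ : 𝒮.mul (𝒮.inv τ) σ = P β := by
    rw [𝒮.inv_mul hσβ, 𝒮.inv_inv, 𝒮.inv_mul_cancel_right (T.src_eq_of_q_src_eq
      (by rw [hS.q_apply β hβ, hsrc]))]
  -- only `α = q σ * β⁻¹` contributes to the convolution sum
  rw [conv, finsum_eq_single _ (T.q τ)]
  · obtain ⟨u, hu⟩ := T.exists_act_eq_of_q_eq (T.q_sec (T.q τ))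
    have hrng : 𝒢.rng (T.q τ) = 𝒢.rng (T.q σ) := by rw [← T.q_rng, 𝒮.rng_mul _ _ hσβ, T.q_rng]
    rw [if_pos hrng, hu, hf, T.inv_act, T.act_mul _ (by rw [𝒮.src_inv, 𝒮.rng_mul _ _ hσβ]),
      hinvτσ, hS.tilde_act_apply hβ, inv_inv, mul_right_comm, ← Units.val_mul, inv_mul_cancel,
      Units.val_one, one_mul]
  · intro α hα
    split_ifs with hrng
    · refine mul_eq_zero_of_right _ (hS.tilde_eq_zero fun hmem => hα ?_)
      rw [T.q_inv_sec_mul hrng] at hmem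
      have hβ' : 𝒢.mul (𝒢.inv α) (T.q σ) = β := hS.isBisection.1 hmem hβ
        (by rw [𝒢.src_mul _ _ (by rw [𝒢.src_inv, hrng]), hsrc])
      rw [hqτ, ← hβ', 𝒢.inv_mul (by rw [𝒢.src_inv, hrng]), 𝒢.inv_inv,
        𝒢.mul_inv_cancel_left hrng.symm]
    · rfl

lemma IsSlice.conv_tilde_apply_eq_zero (hS : T.IsSlice B P) (f : S → R) {σ : S}
    (h : ∀ β ∈ B, 𝒢.src β ≠ 𝒢.src (T.q σ)) : T.conv f (T.tilde (P '' B)) σ = 0 := by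
  refine finsum_eq_zero_of_forall_eq_zero fun α => ?_
  split_ifs with hrng
  · refine mul_eq_zero_of_right _ (hS.tilde_eq_zero fun hmem => ?_)
    rw [T.q_inv_sec_mul hrng] at hmem
    exact h _ hmem (𝒢.src_mul _ _ (by rw [𝒢.src_inv, hrng]))
  · rfl

lemma IsSlice.tilde_conv_apply (hS : T.IsSlice B P) {g : S → R} (hg : T.Contravariant g)
    (σ : S) {β : G} (hβ : β ∈ B) (hrng : 𝒢.rng β = 𝒢.rng (T.q σ)) :
    T.conv (T.tilde (P '' B)) g σ = g (𝒮.mul (𝒮.inv (P β)) σ) := by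
  rw [conv, finsum_eq_single _ β]
  · obtain ⟨u, hu⟩ := T.exists_act_eq_of_q_eq ((T.q_sec β).trans (hS.q_apply β hβ).symm)
    have hcomp : 𝒮.src (𝒮.inv (P β)) = 𝒮.rng σ := by
      rw [𝒮.src_inv]; exact T.rng_eq_of_q_rng_eq (by rw [hS.q_apply β hβ, hrng])
    rw [if_pos hrng, hu, hS.tilde_act_apply hβ, T.inv_act, T.act_mul _ hcomp, hg, inv_inv,
      ← mul_assoc, ← Units.val_mul, inv_mul_cancel, Units.val_one, one_mul]
  · intro α hα
    split_ifs with hα'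
    · refine mul_eq_zero_of_left (hS.tilde_eq_zero fun hmem => hα ?_) _
      rw [T.q_sec] at hmem
      exact hS.isBisection.2 hmem hβ (hα'.trans hrng.symm)
    · rfl

lemma IsSlice.tilde_conv_apply_eq_zero (hS : T.IsSlice B P) (g : S → R) {σ : S}
    (h : ∀ β ∈ B, 𝒢.rng β ≠ 𝒢.rng (T.q σ)) : T.conv (T.tilde (P '' B)) g σ = 0 := by
  refine finsum_eq_zero_of_forall_eq_zero fun α => ?_
  split_ifs with hrng
  · refine mul_eq_zero_of_left (hS.tilde_eq_zero fun hmem => ?_) _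
    rw [T.q_sec] at hmem
    exact h α hmem hrng
  · rfl

lemma IsSlice.image_support_conv_tilde_subset (hS : T.IsSlice B P) {f : S → R}
    (hf : T.Contravariant f) :
    T.q '' Function.support (T.conv f (T.tilde (P '' B))) ⊆
      𝒢.setMul (T.q '' Function.support f) B := by
  rintro _ ⟨σ, hσ, rfl⟩
  obtain ⟨β, hβ, hsrc⟩ : ∃ β ∈ B, 𝒢.src β = 𝒢.src (T.q σ) := by
    by_contra! h
    exact hσ (hS.conv_tilde_apply_eq_zero f h)
  rw [Function.mem_support, hS.conv_tilde_apply hf σ hβ hsrc] at hσ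
  have hqτ := hS.q_mul_inv hβ hsrc
  refine ⟨_, ⟨_, hσ, rfl⟩, β, hβ, ?_, ?_⟩
  · rw [hqτ, 𝒢.src_mul _ _ (by rw [𝒢.rng_inv, hsrc]), 𝒢.src_inv]
  · rw [hqτ, 𝒢.inv_mul_cancel_right hsrc.symm]

lemma IsSlice.isLocallyConstant_conv_tilde [T2Space G] (hS : T.IsSlice B P) {f : S → R}
    (hf : T.MemA f) : IsLocallyConstant (T.conv f (T.tilde (P '' B))) := by
  rw [IsLocallyConstant.iff_eventually_eq]
  intro σ
  have : Nonempty G := ⟨T.q σ⟩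
  -- on the clopen set `E` the convolution is `f (σ * (P β)⁻¹)` for the unique `β ∈ B` with
  -- `src β = src (q σ)`, namely `β = φ (src (q σ))`, which is continuous in `σ` as `B` is compact
  set φ := Function.invFunOn 𝒢.src B
  set E : Set S := (fun σ => 𝒢.src (T.q σ)) ⁻¹' (𝒢.src '' B)
  have hsq : Continuous fun σ => 𝒢.src (T.q σ) := 𝒢.continuous_src.comp T.continuous_q
  have hφB : ∀ σ ∈ E, φ (𝒢.src (T.q σ)) ∈ B := fun σ hσ => Function.invFunOn_mem hσ
  have hφsrc : ∀ σ ∈ E, 𝒢.src (φ (𝒢.src (T.q σ))) = 𝒢.src (T.q σ) := fun σ hσ =>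
    Function.invFunOn_eq hσ
  by_cases hσE : σ ∈ E
  · have hEo : IsOpen E := (𝒢.isLocalHomeomorph_src.isOpenMap _ hS.isOpen).preimage hsq
    have hΦ : ContinuousOn (fun σ => 𝒮.mul σ (𝒮.inv (P (φ (𝒢.src (T.q σ)))))) E :=
      𝒮.continuousOn_mul.comp (continuousOn_id.prodMk (𝒮.continuous_inv.comp_continuousOn
        (hS.continuousOn.comp ((continuousOn_invFunOn_image 𝒢.continuous_src hS.isCompact
          hS.isBisection.1).comp hsq.continuousOn fun _ h => h) hφB)))
        fun σ hσ => hS.src_eq_rng_inv (hφB σ hσ) (hφsrc σ hσ)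
    filter_upwards [hEo.mem_nhds hσE,
      (hΦ.continuousAt (hEo.mem_nhds hσE)).eventually (hf.1.eventually_eq _)] with σ' hσ' hf'
    rwa [hS.conv_tilde_apply hf.contravariant σ' (hφB σ' hσ') (hφsrc σ' hσ'),
      hS.conv_tilde_apply hf.contravariant σ (hφB σ hσE) (hφsrc σ hσE)]
  · have hEc : IsClosed E := (hS.isCompact.image 𝒢.continuous_src).isClosed.preimage hsq
    filter_upwards [hEc.isOpen_compl.mem_nhds hσE] with σ' hσ'
    rw [hS.conv_tilde_apply_eq_zero f fun β hβ h => hσ' ⟨β, hβ, h⟩,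
      hS.conv_tilde_apply_eq_zero f fun β hβ h => hσE ⟨β, hβ, h⟩]

lemma IsSlice.memA_conv_tilde [T2Space G] (hS : T.IsSlice B P) {f : S → R} (hf : T.MemA f) :
    T.MemA (T.conv f (T.tilde (P '' B))) :=
  T.memA_of (hS.isLocallyConstant_conv_tilde hf) (T.contravariant_conv hS.contravariant_tilde)
    (𝒢.isCompact_setMul hf.2.2 hS.isCompact) (hS.image_support_conv_tilde_subset hf.contravariant)

end DiscreteTwist

namespace DiscreteTwist

variable {R : Type*} [CommRing R] {G : Type*} {S : Type*}
  [TopologicalSpace G] [TopologicalSpace S]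
  {𝒢 : AmpleGroupoid G} {𝒮 : EtaleGroupoid S} (T : DiscreteTwist R 𝒢 𝒮) {K : Set G}

lemma tilde_i_one_conv_apply (hK : K ⊆ 𝒢.unitSpace) (hKc : IsCompact K) (hKo : IsOpen K)
    {g : S → R} (hg : T.Contravariant g) (σ : S) :
    T.conv (T.tilde ((fun x => T.i x 1) '' K)) g σ =
      if 𝒢.rng (T.q σ) ∈ K then g σ else 0 := by
  have hS := T.isSlice_i_one hK hKc hKo
  split_ifs with hσ
  · have hu := 𝒢.rng_mem_unitSpace (T.q σ)
    rw [hS.tilde_conv_apply hg σ hσ (𝒢.rng_of_mem_unitSpace hu), T.inv_i hu, inv_one,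
      ← T.rng_eq_i_one, 𝒮.rng_mul_self]
  · exact hS.tilde_conv_apply_eq_zero g fun β hβ h =>
      hσ (by rwa [← h, 𝒢.rng_of_mem_unitSpace (hK hβ)])

lemma conv_tilde_i_one_apply (hK : K ⊆ 𝒢.unitSpace) (hKc : IsCompact K) (hKo : IsOpen K)
    {g : S → R} (hg : T.Contravariant g) (σ : S) :
    T.conv g (T.tilde ((fun x => T.i x 1) '' K)) σ =
      if 𝒢.src (T.q σ) ∈ K then g σ else 0 := by
  have hS := T.isSlice_i_one hK hKc hKo
  split_ifs with hσ
  · have hu := 𝒢.src_mem_unitSpace (T.q σ)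
    rw [hS.conv_tilde_apply hg σ hσ (𝒢.src_of_mem_unitSpace hu), T.inv_i hu, inv_one,
      ← T.src_eq_i_one, 𝒮.mul_src_self]
  · exact hS.conv_tilde_apply_eq_zero g fun β hβ h =>
      hσ (by rwa [← h, 𝒢.src_of_mem_unitSpace (hK hβ)])

lemma tilde_i_one_conv_conv_tilde_i_one (hK : K ⊆ 𝒢.unitSpace) (hKc : IsCompact K) (hKo : IsOpen K)
    {w : S → R} (hw : T.Contravariant w) {r : R}
    (hr : ∀ x ∈ K, w (T.i x 1) = r)
    (hwK : ∀ σ, w σ ≠ 0 → T.q σ ∉ 𝒢.unitSpace → 𝒢.src (T.q σ) ∈ K → 𝒢.rng (T.q σ) ∉ K) :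
    T.conv (T.tilde ((fun x => T.i x 1) '' K))
        (T.conv w (T.tilde ((fun x => T.i x 1) '' K))) =
      fun σ => r * T.tilde ((fun x => T.i x 1) '' K) σ := by
  have hS := T.isSlice_i_one hK hKc hKo
  funext σ
  rw [T.tilde_i_one_conv_apply hK hKc hKo (T.contravariant_conv hS.contravariant_tilde),
    T.conv_tilde_i_one_apply hK hKc hKo hw]
  by_cases hσ : T.q σ ∈ K
  · have hu := hK hσ
    obtain ⟨t, ht⟩ := hS.exists_act_eq hσ
    rw [if_pos (by rwa [𝒢.rng_of_mem_unitSpace hu]), if_pos (by rwa [𝒢.src_of_mem_unitSpace hu]),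
      ht, hw, hS.tilde_act_apply hσ, hr _ hσ, mul_comm]
  · rw [hS.tilde_eq_zero hσ, mul_zero]
    split_ifs with hrng hsrc
    · by_contra hne
      exact hwK σ hne (fun hu => hσ (by rwa [← 𝒢.src_of_mem_unitSpace hu])) hsrc hrng
    all_goals rfl

lemma isSlice_image_q {K : Set S} (hK : K ⊆ 𝒮.unitSpace) (hKc : IsCompact K) (hKo : IsOpen K) :
    T.IsSlice (T.q '' K) (fun x => T.i x 1) :=
  T.isSlice_i_one (T.q_unit_bij.mapsTo.mono_left hK).image_subset (hKc.image T.continuous_q)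
    (T.isOpenMap_q K hKo)

lemma image_i_one_image_q {K : Set S} (hK : K ⊆ 𝒮.unitSpace) :
    (fun x => T.i x 1) '' (T.q '' K) = K := by
  rw [Set.image_image]
  exact (Set.image_congr fun σ hσ => T.i_one_q (hK hσ)).trans (Set.image_id K)

lemma memA_tilde_of_subset_unitSpace [T2Space G] {K : Set S} (hK : K ⊆ 𝒮.unitSpace)
    (hKc : IsCompact K) (hKo : IsOpen K) : T.MemA (T.tilde K) := by
  simpa only [T.image_i_one_image_q hK] using (T.isSlice_image_q hK hKc hKo).memA_tilde

lemma memA_conv_tilde_of_subset_unitSpace [T2Space G] {K : Set S} (hK : K ⊆ 𝒮.unitSpace)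
    (hKc : IsCompact K) (hKo : IsOpen K) {f : S → R} (hf : T.MemA f) :
    T.MemA (T.conv f (T.tilde K)) := by
  simpa only [T.image_i_one_image_q hK] using (T.isSlice_image_q hK hKc hKo).memA_conv_tilde hf

lemma tilde_apply_of_subset_unitSpace {K : Set S} (hK : K ⊆ 𝒮.unitSpace) (hKc : IsCompact K)
    (hKo : IsOpen K) {σ : S} (hσ : σ ∈ K) : T.tilde K σ = 1 := by
  have := (T.isSlice_image_q hK hKc hKo).tilde_act_apply (Set.mem_image_of_mem T.q hσ) 1
  rwa [T.image_i_one_image_q hK, T.i_one_q (hK hσ), T.act_one, inv_one, Units.val_one] at this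

end DiscreteTwist

namespace DiscreteTwist

variable {R : Type*} [CommRing R] {G : Type*} {S : Type*}
  [TopologicalSpace G] [TopologicalSpace S]
  {𝒢 : AmpleGroupoid G} {𝒮 : EtaleGroupoid S} (T : DiscreteTwist R 𝒢 𝒮)
  {Γ : Type*} {c : G → Γ}

noncomputable def homComponent (c : G → Γ) (f : S → R) (γ : Γ) : S → R :=
  fun σ => if c (T.q σ) = γ then f σ else 0

lemma image_support_homComponent_subset (f : S → R) (γ : Γ) :
    T.q '' Function.support (T.homComponent c f γ) ⊆ c ⁻¹' {γ} := by
  rintro _ ⟨σ, hσ, rfl⟩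
  by_contra h
  exact hσ (if_neg h)

variable {T} in
lemma MemA.homComponent (hc : IsLocallyConstant c) {f : S → R} (hf : T.MemA f) (γ : Γ) :
    T.MemA (T.homComponent c f γ) := by
  refine T.memA_of ((hc.comp_continuous T.continuous_q).comp₂ hf.1 fun a b =>
    if a = γ then b else 0) (fun t σ => ?_) hf.2.2 (Set.image_mono fun σ hσ h => hσ ?_)
  · simp only [DiscreteTwist.homComponent, T.q_act, hf.contravariant t σ]
    split_ifs <;> simp
  · simp only [DiscreteTwist.homComponent, h, ite_self]

lemma sum_homComponent {f : S → R} {F : Finset Γ} (hF : ∀ σ, f σ ≠ 0 → c (T.q σ) ∈ F) :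
    ∑ γ ∈ F, T.homComponent c f γ = f := by
  funext σ
  simp only [Finset.sum_apply, DiscreteTwist.homComponent, Finset.sum_ite_eq]
  split_ifs with h
  · rfl
  · exact (not_imp_comm.1 (hF σ) h).symm ▸ rfl

lemma exists_finset_degrees (hc : IsLocallyConstant c) {f : S → R} (hf : T.MemA f) :
    ∃ F : Finset Γ, ∀ σ, f σ ≠ 0 → c (T.q σ) ∈ F := by
  obtain ⟨F, hF⟩ := hf.2.2.elim_finite_subcover (fun γ => c ⁻¹' {γ}) (fun γ => hc {γ})
    fun α _ => Set.mem_iUnion.2 ⟨c α, rfl⟩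
  refine ⟨F, fun σ hσ => ?_⟩
  obtain ⟨γ, hγ, hσγ⟩ := Set.mem_iUnion₂.1 (hF ⟨σ, hσ, rfl⟩)
  rwa [show c (T.q σ) = γ from hσγ]

end DiscreteTwist

namespace DiscreteTwist

variable {R : Type*} [CommRing R] {G : Type*} {S : Type*}
  [TopologicalSpace G] [TopologicalSpace S] [T2Space G]
  {𝒢 : AmpleGroupoid G} {𝒮 : EtaleGroupoid S} (T : DiscreteTwist R 𝒢 𝒮)
  {Γ : Type*} [Group Γ] {c : G → Γ}

lemma exists_conv_ne_zero_at_unit (hc : 𝒢.IsGrading c) {p : S → R} (hp : T.MemA p) {γ : Γ}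
    (hpγ : T.q '' Function.support p ⊆ c ⁻¹' {γ}) {σ₀ : S} (hσ₀ : p σ₀ ≠ 0) :
    ∃ g, T.MemA g ∧ T.MemA (T.conv p g) ∧ T.q '' Function.support (T.conv p g) ⊆ c ⁻¹' {1} ∧
      T.conv p g (T.i (𝒢.rng (T.q σ₀)) 1) ≠ 0 := by
  -- right convolution with a slice of degree `γ⁻¹` through `(q σ₀)⁻¹` moves `σ₀` to a unit
  have hinv : 𝒢.inv (T.q σ₀) ∈ c ⁻¹' {γ⁻¹} := by
    change c (𝒢.inv (T.q σ₀)) = γ⁻¹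
    rw [hc.map_inv, (hpγ ⟨σ₀, hσ₀, rfl⟩ : c (T.q σ₀) = γ)]
  obtain ⟨B, P, hS, hB, hBγ⟩ := T.exists_isSlice (hc.1 {γ⁻¹}) hinv
  refine ⟨_, hS.memA_tilde, hS.memA_conv_tilde hp, ?_, ?_⟩
  · simpa only [mul_inv_cancel] using
      (hS.image_support_conv_tilde_subset hp.contravariant).trans (hc.setMul_subset hpγ hBγ)
  have hx := 𝒢.rng_mem_unitSpace (T.q σ₀)
  have hsrc : 𝒢.src (𝒢.inv (T.q σ₀)) = 𝒢.src (T.q (T.i (𝒢.rng (T.q σ₀)) 1)) := by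
    rw [𝒢.src_inv, T.q_i hx, 𝒢.src_of_mem_unitSpace hx]
  rw [hS.conv_tilde_apply hp.contravariant _ hB hsrc]
  refine hp.contravariant.apply_ne_zero ?_ hσ₀
  rw [hS.q_mul_inv hB hsrc, 𝒢.inv_inv, T.q_i hx, 𝒢.rng_mul_self]

lemma exists_tilde_conv_conv_tilde_eq (hc : IsLocallyConstant c)
    (heff : interior (𝒢.iso ∩ c ⁻¹' {1}) = 𝒢.unitSpace) {w : S → R} (hw : T.MemA w)
    (hw1 : T.q '' Function.support w ⊆ c ⁻¹' {1}) {x : G} (hx : x ∈ 𝒢.unitSpace)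
    (hwx : w (T.i x 1) ≠ 0) :
    ∃ K : Set S, K ⊆ 𝒮.unitSpace ∧ K.Nonempty ∧ IsCompact K ∧ IsOpen K ∧
      ∃ r ≠ 0, T.conv (T.tilde K) (T.conv w (T.tilde K)) = fun σ => r * T.tilde K σ := by
  set O := 𝒢.unitSpace ∩ (fun x => T.i x 1) ⁻¹' {σ | w σ = w (T.i x 1)}
  have hO : IsOpen O :=
    (T.continuousOn_i 1).isOpen_inter_preimage 𝒢.isOpen_unitSpace (hw.1.isOpen_fiber _)
  have hxO : x ∈ O := ⟨hx, rfl⟩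
  obtain ⟨K, hKO, hKc, hKo, hKne, hKC⟩ := 𝒢.exists_isCompact_of_avoidable
    (𝒢.avoidable_of_isCompact heff hc (hw.2.2.diff 𝒢.isOpen_unitSpace) (fun α hα => hw1 hα.1)
      (Set.disjoint_left.2 fun α hα => hα.2)) hO ⟨x, hxO⟩
  have hK : K ⊆ 𝒢.unitSpace := fun y hy => (hKO hy).1
  refine ⟨_, Set.image_subset_iff.2 fun y hy => T.i_one_mem_unitSpace (hK hy), hKne.image _,
    hKc.image_of_continuousOn ((T.continuousOn_i 1).mono hK),
    (T.isSlice_i_one hK hKc hKo).isOpen_image, _, hwx,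
    T.tilde_i_one_conv_conv_tilde_i_one hK hKc hKo hw.contravariant (fun y hy => (hKO hy).2)
      fun σ hσ hu => hKC (T.q σ) ⟨⟨σ, hσ, rfl⟩, hu⟩⟩

end DiscreteTwist

namespace DiscreteTwist

variable {R : Type*} [CommRing R] {G : Type*} {S : Type*}
  [TopologicalSpace G] [TopologicalSpace S]
  {𝒢 : AmpleGroupoid G} {𝒮 : EtaleGroupoid S} (T : DiscreteTwist R 𝒢 𝒮)
  {Q : Type*} [AddCommGroup Q] (π : (S → R) → Q)

lemma map_zero_of_map_add (hadd : ∀ f g, T.MemA f → T.MemA g → π (f + g) = π f + π g) :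
    π 0 = 0 := by
  simpa only [add_zero, left_eq_add] using hadd 0 0 T.memA_zero T.memA_zero

lemma map_finsetSum_of_map_add (hadd : ∀ f g, T.MemA f → T.MemA g → π (f + g) = π f + π g)
    {ι : Type*} (s : Finset ι) {F : ι → S → R} (hF : ∀ i ∈ s, T.MemA (F i)) :
    π (∑ i ∈ s, F i) = ∑ i ∈ s, π (F i) := by
  classical
  induction s using Finset.induction_on with
  | empty => simpa using T.map_zero_of_map_add π hadd
  | insert a s ha ih =>
    have hs : ∀ i ∈ s, T.MemA (F i) := fun i hi => hF i (Finset.mem_insert_of_mem hi)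
    rw [Finset.sum_insert ha, Finset.sum_insert ha,
      hadd _ _ (hF a (Finset.mem_insert_self a s)) (T.memA_finsetSum s hs), ih hs]

lemma injOn_of_map_eq_zero (hadd : ∀ f g, T.MemA f → T.MemA g → π (f + g) = π f + π g)
    (hker : ∀ f, T.MemA f → π f = 0 → f = 0) : Set.InjOn π {f | T.MemA f} := by
  intro f hf g hg hfg
  have hneg : π (-g) = -π g := by
    refine eq_neg_of_add_eq_zero_right ?_
    rw [← hadd _ _ hg hg.neg, add_neg_cancel, T.map_zero_of_map_add π hadd]
  exact add_neg_eq_zero.1 (hker _ (hf.add hg.neg) (by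
    rw [hadd _ _ hf hg.neg, hneg, hfg, add_neg_cancel]))

lemma map_homComponent_eq_zero {Γ : Type*} {c : G → Γ} (hc : IsLocallyConstant c)
    (gr : Γ → AddSubgroup Q)
    (hindep : ∀ (F : Finset Γ) (x : Γ → Q), (∀ γ ∈ F, x γ ∈ gr γ) →
      (∑ γ ∈ F, x γ) = 0 → ∀ γ ∈ F, x γ = 0)
    (hadd : ∀ f g, T.MemA f → T.MemA g → π (f + g) = π f + π g)
    (hgraded : ∀ (γ : Γ) (f : S → R), T.MemA f →
      T.q '' Function.support f ⊆ c ⁻¹' {γ} → π f ∈ gr γ)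
    {h : S → R} (hh : T.MemA h) (hπh : π h = 0) (γ : Γ) :
    π (T.homComponent c h γ) = 0 := by
  classical
  obtain ⟨F, hF⟩ := T.exists_finset_degrees hc hh
  refine hindep (insert γ F) (fun γ => π (T.homComponent c h γ))
    (fun γ _ => hgraded γ _ (hh.homComponent hc γ) (T.image_support_homComponent_subset h γ))
    ?_ γ (Finset.mem_insert_self γ F)
  rw [← T.map_finsetSum_of_map_add π hadd _ fun γ _ => hh.homComponent hc γ,
    T.sum_homComponent fun σ hσ => Finset.mem_insert_of_mem (hF σ hσ), hπh]

end DiscreteTwist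

lemma DiscreteTwist.eq_zero_of_map_eq_zero {R : Type*} [CommRing R] {G : Type*} {S : Type*}
    [TopologicalSpace G] [TopologicalSpace S] [T2Space G]
    {𝒢 : AmpleGroupoid G} {𝒮 : EtaleGroupoid S} (T : DiscreteTwist R 𝒢 𝒮)
    {Γ : Type*} [Group Γ] {c : G → Γ} (hc : 𝒢.IsGrading c)
    (heff : interior (𝒢.iso ∩ c ⁻¹' {1}) = 𝒢.unitSpace)
    {Q : Type*} [Ring Q] (gr : Γ → AddSubgroup Q)
    (hindep : ∀ (F : Finset Γ) (x : Γ → Q), (∀ γ ∈ F, x γ ∈ gr γ) →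
      (∑ γ ∈ F, x γ) = 0 → ∀ γ ∈ F, x γ = 0)
    (π : (S → R) → Q)
    (hadd : ∀ f g, T.MemA f → T.MemA g → π (f + g) = π f + π g)
    (hmul : ∀ f g, T.MemA f → T.MemA g → π (T.conv f g) = π f * π g)
    (hgraded : ∀ (γ : Γ) (f : S → R), T.MemA f →
      T.q '' Function.support f ⊆ c ⁻¹' {γ} → π f ∈ gr γ)
    (hunits : ∀ K : Set S, K ⊆ 𝒮.unitSpace → K.Nonempty → IsCompact K → IsOpen K →
      ∀ r : R, r ≠ 0 → π (fun σ => r * T.tilde K σ) ≠ 0)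
    {h : S → R} (hh : T.MemA h) (hπh : π h = 0) : h = 0 := by
  by_contra hne
  obtain ⟨σ₀, hσ₀⟩ := Function.ne_iff.1 hne
  set p := T.homComponent c h (c (T.q σ₀))
  have hp : T.MemA p := hh.homComponent hc.1 _
  have hπp : π p = 0 := T.map_homComponent_eq_zero π hc.1 gr hindep hadd hgraded hh hπh _
  have hpσ₀ : p σ₀ ≠ 0 := by simpa only [p, DiscreteTwist.homComponent, if_pos rfl]
  obtain ⟨g, hg, hpg, hpg1, hpgx⟩ := T.exists_conv_ne_zero_at_unit hc hp
    (T.image_support_homComponent_subset h _) hpσ₀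
  obtain ⟨K, hK, hKne, hKc, hKo, r, hr, hKpg⟩ := T.exists_tilde_conv_conv_tilde_eq hc.1 heff hpg
    hpg1 (𝒢.rng_mem_unitSpace _) hpgx
  have hKA := T.memA_tilde_of_subset_unitSpace hK hKc hKo
  refine hunits K hK hKne hKc hKo r hr ?_
  rw [← hKpg, hmul _ _ hKA (T.memA_conv_tilde_of_subset_unitSpace hK hKc hKo hpg),
    hmul _ _ hpg hKA, hmul _ _ hp hg, hπp, zero_mul, zero_mul, mul_zero]

theorem stmt_15_general {R : Type*} [CommRing R] {G S : Type*}
    [TopologicalSpace G] [TopologicalSpace S] [T2Space G]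
    {𝒢 : AmpleGroupoid G} {𝒮 : EtaleGroupoid S} (T : DiscreteTwist R 𝒢 𝒮)
    {Γ : Type*} [Group Γ]
    (cG : G → Γ)
    (hcG : 𝒢.IsGrading cG)
    (heff : interior (𝒢.iso ∩ cG ⁻¹' {1}) = 𝒢.unitSpace)
    {Q : Type*} [Ring Q] (gr : Γ → AddSubgroup Q)
    (hindep : ∀ (F : Finset Γ) (x : Γ → Q), (∀ γ ∈ F, x γ ∈ gr γ) →
      (∑ γ ∈ F, x γ) = 0 → ∀ γ ∈ F, x γ = 0)
    (π : (S → R) → Q)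
    (hadd : ∀ f g, T.MemA f → T.MemA g → π (f + g) = π f + π g)
    (hmul : ∀ f g, T.MemA f → T.MemA g → π (T.conv f g) = π f * π g)
    (hgraded : ∀ (γ : Γ) (f : S → R), T.MemA f →
      T.q '' Function.support f ⊆ cG ⁻¹' {γ} → π f ∈ gr γ) :
    Set.InjOn π {f | T.MemA f} ↔
      ∀ K : Set S, K ⊆ 𝒮.unitSpace → K.Nonempty → IsCompact K → IsOpen K →
        ∀ r : R, r ≠ 0 → π (fun σ => r * T.tilde K σ) ≠ 0 := by
  constructor
  · intro hinj K hK ⟨σ, hσ⟩ hKc hKo r hr hπ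
    have h0 := hinj ((T.memA_tilde_of_subset_unitSpace hK hKc hKo).const_mul r) T.memA_zero
      (hπ.trans (T.map_zero_of_map_add π hadd).symm)
    have hrσ := congrFun h0 σ
    rw [T.tilde_apply_of_subset_unitSpace hK hKc hKo hσ, mul_one] at hrσ
    exact hr hrσ
  · intro hunits
    exact T.injOn_of_map_eq_zero π hadd fun h hh hπh =>
      T.eq_zero_of_map_eq_zero hcG heff gr hindep π hadd hmul hgraded hunits hh hπh

/-- Graded Uniqueness Theorem: for a `Γ`-graded discrete
`R`-twist whose clopen subgroupoid `G_ε = c_G⁻¹(ε)` is effective, a graded ring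
homomorphism `π : A_R(G;Σ) → Q` into a `Γ`-graded ring `Q` is injective iff
`π (r 1̃_K) ≠ 0` for every nonempty compact open `K ⊆ Σ⁽⁰⁾` and every
nonzero `r ∈ R`. -/
theorem stmt_15 {R : Type*} [CommRing R] {G S : Type*}
    [TopologicalSpace G] [TopologicalSpace S] [T2Space G] [T2Space S]
    {𝒢 : AmpleGroupoid G} {𝒮 : EtaleGroupoid S} (T : DiscreteTwist R 𝒢 𝒮)
    {Γ : Type*} [Group Γ]
    (cG : G → Γ) (cS : S → Γ)
    (hcG : 𝒢.IsGrading cG) (hcS : 𝒮.IsGrading cS)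
    (hcomm : ∀ σ : S, cS σ = cG (T.q σ))
    (heff : interior (𝒢.iso ∩ cG ⁻¹' {1}) = 𝒢.unitSpace)
    {Q : Type*} [Ring Q] (gr : Γ → AddSubgroup Q)
    (hgrmul : ∀ γ δ : Γ, ∀ x ∈ gr γ, ∀ y ∈ gr δ, x * y ∈ gr (γ * δ))
    (hindep : ∀ (F : Finset Γ) (x : Γ → Q), (∀ γ ∈ F, x γ ∈ gr γ) →
      (∑ γ ∈ F, x γ) = 0 → ∀ γ ∈ F, x γ = 0)
    (π : (S → R) → Q)
    (hzero : π 0 = 0)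
    (hadd : ∀ f g, T.MemA f → T.MemA g → π (f + g) = π f + π g)
    (hmul : ∀ f g, T.MemA f → T.MemA g → π (T.conv f g) = π f * π g)
    (hgraded : ∀ (γ : Γ) (f : S → R), T.MemA f →
      T.q '' Function.support f ⊆ cG ⁻¹' {γ} → π f ∈ gr γ) :
    Set.InjOn π {f | T.MemA f} ↔
      ∀ K : Set S, K ⊆ 𝒮.unitSpace → K.Nonempty → IsCompact K → IsOpen K →
        ∀ r : R, r ≠ 0 → π (fun σ => r * T.tilde K σ) ≠ 0 :=
  stmt_15_general T cG hcG heff gr hindep π hadd hmul hgraded
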